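/- Let n ≥ 3, U₁,…,Uₙ closed subspaces of X with Z = ∩U_i, T the Malitsky–Tam operator on X^{n−1}, 0 < λ < 1, and z_{k+1} = (1−λ)z_k + λT z_k starting from z₀ = (z_{0,1},…,z_{0,n−1}). Then z_k converges strongly to P_{Fix T}(z₀) and P₁(Q₁ z_k) → P_Z((z_{0,1}+⋯+z_{0,n−1})/(n−1)) strongly. In particular, if z₀ = (x₀,…,x₀), then P₁(Q₁ z_k) → P_Z(x₀). -/

import Mathlib

open Filter

variable {X : Type*} [NormedAddCommGroup X] [InnerProductSpace ℝ X] [CompleteSpace X]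

/-- The orthogonal projection onto a subspace, as a map `X → X`. -/
noncomputable def pr (U : Submodule ℝ X) [U.HasOrthogonalProjection] (x : X) : X :=
  U.orthogonalProjectionOnto x

/-- Extension of a tuple in `X^m` to an `ℕ`-indexed family (by zero). -/
noncomputable def extz {m : ℕ} (z : PiLp 2 (fun _ : Fin m => X)) : ℕ → X :=
  fun i => if h : i < m then z ⟨i, h⟩ else 0

/-- The auxiliary sequence `x₁, …, xₙ` of the Malitsky–Tam operator (0-based indexing):
`x 0 = P₀ (z 0)`, `x i = Pᵢ (x (i−1) + z i − z (i−1))` for `1 ≤ i ≤ n − 2`, and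
`x (n−1) = P_{n−1} (x 0 + x (n−2) − z (n−2))`. -/
noncomputable def mtX (n : ℕ) (U : ℕ → Submodule ℝ X) [∀ i, (U i).HasOrthogonalProjection]
    (z : ℕ → X) : ℕ → X
  | 0 => pr (U 0) (z 0)
  | (i + 1) =>
      if i + 1 ≤ n - 2 then pr (U (i + 1)) (mtX n U z i + z (i + 1) - z i)
      else if i + 1 = n - 1 then pr (U (n - 1)) (mtX n U z 0 + mtX n U z i - z i)
      else 0

/-- The Malitsky–Tam operator `T z = z + (x₂ − x₁, …, xₙ − x_{n−1})` on `X^{n−1}`. -/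
noncomputable def mtT (n : ℕ) (U : ℕ → Submodule ℝ X) [∀ i, (U i).HasOrthogonalProjection]
    (z : PiLp 2 (fun _ : Fin (n - 1) => X)) : PiLp 2 (fun _ : Fin (n - 1) => X) :=
  (WithLp.equiv 2 (∀ _ : Fin (n - 1), X)).symm fun j =>
    z j + (mtX n U (extz z) ((j : ℕ) + 1) - mtX n U (extz z) (j : ℕ))

/-- The diagonal embedding `X → X^m`, `x ↦ (x, …, x)`, as a linear map into `ℓ²`-product. -/
noncomputable def diagMap (m : ℕ) (X : Type*) [NormedAddCommGroup X]
    [InnerProductSpace ℝ X] : X →ₗ[ℝ] PiLp 2 (fun _ : Fin m => X) :=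
  (WithLp.linearEquiv 2 ℝ (∀ _ : Fin m, X)).symm.toLinearMap ∘ₗ
    LinearMap.pi fun _ => LinearMap.id

/-- The partial-sum operator `(y₁, …, y_m) ↦ (y₁, y₁ + y₂, …, y₁ + ⋯ + y_m)` on `X^m`. -/
noncomputable def psumL (m : ℕ) (X : Type*) [NormedAddCommGroup X]
    [InnerProductSpace ℝ X] :
    PiLp 2 (fun _ : Fin m => X) →ₗ[ℝ] PiLp 2 (fun _ : Fin m => X) :=
  (WithLp.linearEquiv 2 ℝ (∀ _ : Fin m, X)).symm.toLinearMap ∘ₗ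
    (LinearMap.pi fun j : Fin m =>
      ∑ i ∈ Finset.univ.filter (fun i : Fin m => i ≤ j), LinearMap.proj i) ∘ₗ
    (WithLp.linearEquiv 2 ℝ (∀ _ : Fin m, X)).toLinearMap

/-- The range of the partial-sum operator `Ψ` restricted to `U₁^⊥ × ⋯ × U_m^⊥`. -/
noncomputable def ranPsi (m : ℕ) (U : ℕ → Submodule ℝ X) :
    Submodule ℝ (PiLp 2 (fun _ : Fin m => X)) :=
  Submodule.map (psumL m X)
    (Submodule.comap (WithLp.linearEquiv 2 ℝ (∀ _ : Fin m, X)).toLinearMap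
      (Submodule.pi Set.univ fun j : Fin m => (U (j : ℕ))ᗮ))

open Topology

/-!
The Malitsky–Tam operator `T` is linear, and each of its coordinates satisfies a Pythagoras
identity for one projection; these telescope to `‖T z‖² + ‖x₁ - xₙ‖² = ‖z‖²`, so `T` is
nonexpansive. For a linear nonexpansive `N`, the averaged iteration `z ↦ (1 - λ) z + λ N z`
satisfies `∑ λ (1 - λ) ‖z_k - N z_k‖² ≤ ‖z₀‖²`, so its iterates tend to `0` on `range (1 - N)`,
hence (being equicontinuous) on its closure `(Fix N)ᗮ`, while they fix `Fix N`: thus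
`z_k → P_{Fix T} z₀`. A fixed point `y` of `T` has `x₁ = ⋯ = xₙ =: x ∈ Z` and `y_j - x ∈ Zᗮ`, and
the diagonal of `Z` lies in `Fix T`, so `z₀ - P_{Fix T} z₀` has coordinate sum in `Zᗮ`. Hence the
limit `x = P₁ (P_{Fix T} z₀)₁` of `P₁ (z_k)₁` is the projection onto `Z` of the average of `z₀`.
-/

lemma iInf_fin_le_of_lt {α : Type*} [CompleteLattice α] {n : ℕ} (f : ℕ → α) {i : ℕ} (hi : i < n) :
    (⨅ j : Fin n, f j) ≤ f i :=
  iInf_le (fun j : Fin n => f j) ⟨i, hi⟩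

lemma inv_smul_sum_const {E : Type*} [AddCommGroup E] [Module ℝ E] {m : ℕ} (hm : m ≠ 0) (c : E) :
    (m : ℝ)⁻¹ • ∑ _j : Fin m, c = c := by
  rw [Finset.sum_const, Finset.card_fin, ← Nat.cast_smul_eq_nsmul ℝ, inv_smul_smul₀ (by simpa)]

section Averaged

variable {E : Type*} [NormedAddCommGroup E] [InnerProductSpace ℝ E]

lemma norm_one_sub_smul_add_smul_sq (t : ℝ) (a b : E) :
    ‖(1 - t) • a + t • b‖ ^ 2 =
      (1 - t) * ‖a‖ ^ 2 + t * ‖b‖ ^ 2 - t * (1 - t) * ‖a - b‖ ^ 2 := by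
  simp only [← real_inner_self_eq_norm_sq, inner_add_add_self, inner_sub_sub_self,
    real_inner_smul_left, real_inner_smul_right, real_inner_comm a b]
  ring

lemma norm_averaged_sq_add_le {N : E → E} (hN : ∀ x, ‖N x‖ ≤ ‖x‖) {t : ℝ} (ht₀ : 0 ≤ t)
    (x : E) : ‖(1 - t) • x + t • N x‖ ^ 2 + t * (1 - t) * ‖x - N x‖ ^ 2 ≤ ‖x‖ ^ 2 := by
  have : ‖N x‖ ^ 2 ≤ ‖x‖ ^ 2 := pow_le_pow_left₀ (norm_nonneg _) (hN x) 2
  rw [norm_one_sub_smul_add_smul_sq]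
  nlinarith

theorem tendsto_sub_of_averaged_iteration {N : E → E} (hN : ∀ x, ‖N x‖ ≤ ‖x‖) {t : ℝ}
    (ht₀ : 0 < t) (ht₁ : t < 1) {z : ℕ → E}
    (hz : ∀ k, z (k + 1) = (1 - t) • z k + t • N (z k)) :
    Tendsto (fun k => z k - N (z k)) atTop (𝓝 0) := by
  set d : ℕ → ℝ := fun k => ‖z k - N (z k)‖ ^ 2
  have hc : 0 < t * (1 - t) := mul_pos ht₀ (by linarith)
  have hpartial : ∀ K, ∑ k ∈ Finset.range K, t * (1 - t) * d k + ‖z K‖ ^ 2 ≤ ‖z 0‖ ^ 2 := by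
    intro K
    induction K with
    | zero => simp
    | succ K ih =>
      have := norm_averaged_sq_add_le hN ht₀.le (z K)
      rw [Finset.sum_range_succ, hz]
      linarith
  have hsum : Summable d := by
    refine (summable_mul_left_iff hc.ne').1 (summable_of_sum_range_le (c := ‖z 0‖ ^ 2)
      (fun k => by positivity) fun K => ?_)
    linarith [hpartial K, sq_nonneg ‖z K‖]
  have hsqrt := (Real.continuous_sqrt.tendsto 0).comp hsum.tendsto_atTop_zero
  rw [Real.sqrt_zero] at hsqrt
  refine tendsto_zero_iff_norm_tendsto_zero.2 (hsqrt.congr fun k => ?_)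
  exact Real.sqrt_sq (norm_nonneg _)

noncomputable def relaxation (t : ℝ) (N : E →L[ℝ] E) : E →L[ℝ] E := (1 - t) • 1 + t • N

lemma relaxation_apply (t : ℝ) (N : E →L[ℝ] E) (x : E) :
    relaxation t N x = (1 - t) • x + t • N x := rfl

lemma norm_relaxation_le {N : E →L[ℝ] E} (hN : ‖N‖ ≤ 1) {t : ℝ} (ht₀ : 0 ≤ t) (ht₁ : t ≤ 1) :
    ‖relaxation t N‖ ≤ 1 :=
  calc ‖relaxation t N‖ ≤ (1 - t) * ‖(1 : E →L[ℝ] E)‖ + t * ‖N‖ := by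
        refine (norm_add_le _ _).trans ?_
        rw [norm_smul, norm_smul, Real.norm_of_nonneg (by linarith), Real.norm_of_nonneg ht₀]
    _ ≤ (1 - t) * 1 + t * 1 := by
        have h₁ : ‖(1 : E →L[ℝ] E)‖ ≤ 1 := ContinuousLinearMap.norm_id_le
        have ht : 0 ≤ 1 - t := by linarith
        gcongr
    _ = 1 := by ring

lemma commute_relaxation (t : ℝ) (N : E →L[ℝ] E) : Commute (relaxation t N) N := by
  ext x
  simp [relaxation]

variable [CompleteSpace E]

lemma ContinuousLinearMap.orthogonal_eqLocus_one_le (f : E →L[ℝ] E) (hf : ‖f‖ ≤ 1) :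
    (f.eqLocus (1 : E →L[ℝ] E))ᗮ ≤
      (LinearMap.range ((1 - f : E →L[ℝ] E) : E →ₗ[ℝ] E)).topologicalClosure := by
  rw [← Submodule.orthogonal_orthogonal_eq_closure]
  -- `x ⊥ range (1 - f)` gives `⟪f x, x⟫ = ‖x‖²`; with `‖f x‖ ≤ ‖x‖` this forces `f x = x`.
  refine Submodule.orthogonal_le fun x hx => ?_
  have hinner : ∀ y, inner ℝ (f y) x = inner ℝ y x := fun y => by
    have h := Submodule.inner_right_of_mem_orthogonal (LinearMap.mem_range_self _ y) hx
    rw [ContinuousLinearMap.coe_coe, sub_apply, inner_sub_left, sub_eq_zero] at h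
    simpa using h.symm
  refine eq_of_norm_le_re_inner_eq_norm_sq (𝕜 := ℝ)
    (f.le_of_opNorm_le hf x |>.trans (one_mul _).le) ?_
  simp [hinner]

lemma tendsto_relaxation_pow_apply_of_mem_orthogonal {N : E →L[ℝ] E} (hN : ‖N‖ ≤ 1) {t : ℝ}
    (ht₀ : 0 < t) (ht₁ : t < 1) {y : E} (hy : y ∈ (N.eqLocus (1 : E →L[ℝ] E))ᗮ) :
    Tendsto (fun k => (relaxation t N ^ k) y) atTop (𝓝 0) := by
  set A := relaxation t N
  have hNx : ∀ x, ‖N x‖ ≤ ‖x‖ := fun x => N.le_of_opNorm_le hN x |>.trans (one_mul _).le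
  have hclosed : IsClosed {y | Tendsto (fun k => (A ^ k) y) atTop (𝓝 0)} := by
    refine Equicontinuous.isClosed_setOfPred_tendsto ?_ continuous_const
    refine (LipschitzWith.uniformEquicontinuous _ 1 fun k => ?_).equicontinuous
    have hA : ‖A‖₊ ≤ 1 := mod_cast norm_relaxation_le hN ht₀.le ht₁.le
    rw [FunLike.coe_pow_eq_iterate]
    simpa using (A.lipschitz.weaken hA).iterate k
  have hrange : ∀ x, Tendsto (fun k => (A ^ k) ((1 - N) x)) atTop (𝓝 0) := fun x => by
    have hcomm : ∀ k, (A ^ k) ((1 - N) x) = (A ^ k) x - N ((A ^ k) x) := fun k => by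
      rw [sub_apply, map_sub, ← mul_apply_eq_comp, ← mul_apply_eq_comp (A ^ k),
        ((commute_relaxation t N).pow_left k).eq]
      rfl
    simp only [hcomm]
    refine tendsto_sub_of_averaged_iteration hNx ht₀ ht₁ fun k => ?_
    rw [pow_succ', mul_apply_eq_comp, relaxation_apply]
  exact closure_minimal (Set.range_subset_iff.2 hrange) hclosed (N.orthogonal_eqLocus_one_le hN hy)

theorem tendsto_starProjection_of_averaged_iteration (N : E →L[ℝ] E) (hN : ‖N‖ ≤ 1)
    (K : Submodule ℝ E) [K.HasOrthogonalProjection] (hK : K = N.eqLocus (1 : E →L[ℝ] E))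
    {t : ℝ} (ht₀ : 0 < t) (ht₁ : t < 1) {z : ℕ → E}
    (hz : ∀ k, z (k + 1) = (1 - t) • z k + t • N (z k)) :
    Tendsto z atTop (𝓝 (K.starProjection (z 0))) := by
  set p := K.starProjection (z 0)
  have hp : p ∈ K := K.starProjection_apply_mem _
  have hzp : z 0 - p ∈ Kᗮ := K.sub_starProjection_mem_orthogonal _
  rw [hK] at hp hzp
  have hz' : ∀ k, z k = p + (relaxation t N ^ k) (z 0 - p) := fun k => by
    induction k with
    | zero => simp
    | succ k ih =>
      rw [hz, ih, pow_succ', mul_apply_eq_comp, relaxation_apply, map_add,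
        show N p = p from hp]
      module
  have hlim := (tendsto_const_nhds (x := p)).add
    (tendsto_relaxation_pow_apply_of_mem_orthogonal hN ht₀ ht₁ hzp)
  rw [add_zero] at hlim
  exact hlim.congr fun k => (hz' k).symm

end Averaged

section Hilbert

variable {E : Type*} [NormedAddCommGroup E] [InnerProductSpace ℝ E]

lemma norm_sub_sq_add_norm_sub_sq_of_inner_eq_zero {p q : E} (h : inner ℝ p q = 0) (c : E) :
    ‖c - q‖ ^ 2 + ‖c - p‖ ^ 2 = ‖c‖ ^ 2 + ‖c - (p + q)‖ ^ 2 := by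
  simp only [← real_inner_self_eq_norm_sq, inner_sub_sub_self,
    inner_add_left, inner_add_right, h, real_inner_comm p q]
  ring

lemma Submodule.eq_of_mem_of_sub_mem_orthogonal {K : Submodule ℝ E} {a v w : E} (hv : v ∈ K)
    (hw : w ∈ K) (hav : a - v ∈ Kᗮ) (haw : a - w ∈ Kᗮ) : v = w := by
  have h : v - w ∈ K ⊓ Kᗮ := ⟨K.sub_mem hv hw, by simpa using Kᗮ.sub_mem haw hav⟩
  rwa [K.inf_orthogonal_eq_bot, Submodule.mem_bot, sub_eq_zero] at h

lemma Submodule.eq_starProjection_of_forall_norm_sub_le (K : Submodule ℝ E)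
    [K.HasOrthogonalProjection] {u v : E} (hv : v ∈ K) (hmin : ∀ w ∈ K, ‖u - v‖ ≤ ‖u - w‖) :
    v = K.starProjection u := by
  have hinf : ‖u - v‖ = ⨅ w : K, ‖u - w‖ :=
    le_antisymm (le_ciInf fun w => hmin w w.2)
      (ciInf_le (⟨0, Set.forall_mem_range.2 fun _ => norm_nonneg _⟩ :
        BddBelow (Set.range fun w : K => ‖u - w‖)) ⟨v, hv⟩)
  exact (K.eq_starProjection_of_mem_of_inner_eq_zero hv
    ((norm_eq_iInf_iff_real_inner_eq_zero K hv).1 hinf)).symm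

lemma inner_toLp_const (m : ℕ) (x : E) (v : PiLp 2 (fun _ : Fin m => E)) :
    inner ℝ (WithLp.toLp 2 fun _ => x : PiLp 2 (fun _ : Fin m => E)) v = inner ℝ x (∑ j, v j) := by
  simp [PiLp.inner_apply, inner_sum]

end Hilbert

section Extension

variable {E : Type*} [NormedAddCommGroup E]

lemma extz_coe {m : ℕ} (z : PiLp 2 (fun _ : Fin m => E)) (j : Fin m) : extz z j = z j := by
  simp [extz]

lemma extz_toLp_const {m : ℕ} (x : E) {k : ℕ} (hk : k < m) :
    extz (WithLp.toLp 2 fun _ => x : PiLp 2 (fun _ : Fin m => E)) k = x := by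
  simp [extz, hk]

lemma extz_add {m : ℕ} (z w : PiLp 2 (fun _ : Fin m => E)) : extz (z + w) = extz z + extz w := by
  ext k
  by_cases hk : k < m <;> simp [extz, hk]

lemma extz_smul [Module ℝ E] {m : ℕ} (c : ℝ) (z : PiLp 2 (fun _ : Fin m => E)) :
    extz (c • z) = c • extz z := by
  ext k
  by_cases hk : k < m <;> simp [extz, hk]

end Extension

section MalitskyTam

variable {E : Type*} [NormedAddCommGroup E] [InnerProductSpace ℝ E]

variable {n : ℕ} {U : ℕ → Submodule ℝ E} [∀ i, (U i).HasOrthogonalProjection]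

lemma pr_eq_starProjection (V : Submodule ℝ E) [V.HasOrthogonalProjection] :
    pr V = V.starProjection := rfl

lemma pr_mem (V : Submodule ℝ E) [V.HasOrthogonalProjection] (v : E) : pr V v ∈ V :=
  V.starProjection_apply_mem v

lemma sub_pr_mem_orthogonal (V : Submodule ℝ E) [V.HasOrthogonalProjection] (v : E) :
    v - pr V v ∈ Vᗮ :=
  V.sub_starProjection_mem_orthogonal v

lemma pr_eq_self {V : Submodule ℝ E} [V.HasOrthogonalProjection] {v : E} (hv : v ∈ V) :
    pr V v = v :=
  V.starProjection_eq_self_iff.2 hv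

lemma norm_sub_sub_pr_sq_add (V : Submodule ℝ E) [V.HasOrthogonalProjection] (a c : E) :
    ‖c - (a - pr V a)‖ ^ 2 + ‖c - pr V a‖ ^ 2 = ‖c‖ ^ 2 + ‖c - a‖ ^ 2 := by
  have h := Submodule.inner_right_of_mem_orthogonal (pr_mem V a) (sub_pr_mem_orthogonal V a)
  rw [norm_sub_sq_add_norm_sub_sq_of_inner_eq_zero h, add_sub_cancel]

lemma mtX_zero (z : ℕ → E) : mtX n U z 0 = pr (U 0) (z 0) := by
  rw [mtX]

lemma mtX_succ_of_le (z : ℕ → E) {i : ℕ} (hi : i + 1 ≤ n - 2) :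
    mtX n U z (i + 1) = pr (U (i + 1)) (mtX n U z i + z (i + 1) - z i) := by
  rw [mtX.eq_2, if_pos hi]

lemma mtX_succ_of_eq (z : ℕ → E) {i : ℕ} (hi : i + 1 = n - 1) :
    mtX n U z (i + 1) = pr (U (i + 1)) (mtX n U z 0 + mtX n U z i - z i) := by
  rw [mtX.eq_2, if_neg (by omega), if_pos hi, hi]

lemma mtX_mem (z : ℕ → E) {i : ℕ} (hi : i ≤ n - 1) : mtX n U z i ∈ U i := by
  rcases i with _ | i
  · rw [mtX_zero]
    exact pr_mem _ _
  · rcases Nat.lt_or_ge (i + 1) (n - 1) with h | h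
    · rw [mtX_succ_of_le z (by omega)]
      exact pr_mem _ _
    · rw [mtX_succ_of_eq z (by omega)]
      exact pr_mem _ _

lemma mtX_add (z w : ℕ → E) (i : ℕ) : mtX n U (z + w) i = mtX n U z i + mtX n U w i := by
  have h₀ : mtX n U (z + w) 0 = mtX n U z 0 + mtX n U w 0 := by
    simp [mtX_zero, pr_eq_starProjection]
  induction i with
  | zero => exact h₀
  | succ i ih =>
    rw [mtX.eq_2, mtX.eq_2, mtX.eq_2]
    split_ifs
    · rw [ih, pr_eq_starProjection, ← map_add]
      congr 1
      simp only [Pi.add_apply]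
      abel
    · rw [h₀, ih, pr_eq_starProjection, ← map_add]
      congr 1
      simp only [Pi.add_apply]
      abel
    · simp

lemma mtX_smul (c : ℝ) (z : ℕ → E) (i : ℕ) : mtX n U (c • z) i = c • mtX n U z i := by
  have h₀ : mtX n U (c • z) 0 = c • mtX n U z 0 := by
    simp [mtX_zero, pr_eq_starProjection]
  induction i with
  | zero => exact h₀
  | succ i ih =>
    rw [mtX.eq_2, mtX.eq_2]
    split_ifs
    · rw [ih, pr_eq_starProjection, ← map_smul, Pi.smul_apply, Pi.smul_apply, smul_sub, smul_add]
    · rw [h₀, ih, pr_eq_starProjection, ← map_smul, Pi.smul_apply, smul_sub, smul_add]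
    · simp

lemma mtT_apply (z : PiLp 2 (fun _ : Fin (n - 1) => E)) (j : Fin (n - 1)) :
    mtT n U z j = z j + (mtX n U (extz z) (j + 1) - mtX n U (extz z) j) := rfl

lemma sum_norm_sq_mtT_steps (z : ℕ → E) {m : ℕ} (hm : m ≤ n - 2) :
    ∑ j ∈ Finset.range m, ‖z j + (mtX n U z (j + 1) - mtX n U z j)‖ ^ 2
        + ‖z m - mtX n U z m‖ ^ 2
      = ∑ j ∈ Finset.range m, ‖z (j + 1)‖ ^ 2 + ‖z 0 - mtX n U z 0‖ ^ 2 := by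
  induction m with
  | zero => simp
  | succ m ih =>
    have step := norm_sub_sub_pr_sq_add (U (m + 1)) (mtX n U z m + z (m + 1) - z m) (z (m + 1))
    rw [← mtX_succ_of_le z hm, show z (m + 1) - (mtX n U z m + z (m + 1) - z m
        - mtX n U z (m + 1)) = z m + (mtX n U z (m + 1) - mtX n U z m) by abel,
      show z (m + 1) - (mtX n U z m + z (m + 1) - z m) = z m - mtX n U z m by abel] at step
    rw [Finset.sum_range_succ, Finset.sum_range_succ]
    linarith [ih (by omega)]

lemma norm_mtT_sq_add (hn : 2 ≤ n) (z : PiLp 2 (fun _ : Fin (n - 1) => E)) :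
    ‖mtT n U z‖ ^ 2 + ‖mtX n U (extz z) 0 - mtX n U (extz z) (n - 1)‖ ^ 2 = ‖z‖ ^ 2 := by
  set w := extz z
  set x := mtX n U w
  have hT : ‖mtT n U z‖ ^ 2 = ∑ j ∈ Finset.range (n - 1), ‖w j + (x (j + 1) - x j)‖ ^ 2 := by
    rw [PiLp.norm_sq_eq_of_L2, ← Fin.sum_univ_eq_sum_range (fun j => ‖w j + (x (j + 1) - x j)‖ ^ 2)]
    simp only [mtT_apply, w, x, extz_coe]
  have hz : ‖z‖ ^ 2 = ∑ j ∈ Finset.range (n - 1), ‖w j‖ ^ 2 := by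
    rw [PiLp.norm_sq_eq_of_L2, ← Fin.sum_univ_eq_sum_range (fun j => ‖w j‖ ^ 2)]
    simp only [w, extz_coe]
  have hsteps := sum_norm_sq_mtT_steps (U := U) w (le_refl (n - 2))
  have hlast := norm_sub_sub_pr_sq_add (U (n - 2 + 1)) (x 0 + x (n - 2) - w (n - 2)) (x 0)
  rw [← mtX_succ_of_eq w (by omega), show x 0 - (x 0 + x (n - 2) - w (n - 2)
      - x (n - 2 + 1)) = w (n - 2) + (x (n - 2 + 1) - x (n - 2)) by abel,
    show x 0 - (x 0 + x (n - 2) - w (n - 2)) = w (n - 2) - x (n - 2) by abel] at hlast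
  have hfirst := norm_sub_sub_pr_sq_add (U 0) (w 0) (w 0)
  rw [← mtX_zero (n := n) (U := U), sub_sub_cancel, sub_self, norm_zero] at hfirst
  rw [hT, hz, show n - 1 = n - 2 + 1 by omega, Finset.sum_range_succ, Finset.sum_range_succ']
  linarith

lemma norm_mtT_le (hn : 2 ≤ n) (z : PiLp 2 (fun _ : Fin (n - 1) => E)) :
    ‖mtT n U z‖ ≤ ‖z‖ :=
  pow_le_pow_iff_left₀ (norm_nonneg _) (norm_nonneg _) two_ne_zero |>.1 <| by
    rw [← norm_mtT_sq_add (U := U) hn z]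
    exact le_add_of_nonneg_right (sq_nonneg _)

variable (n U) in
noncomputable def mtTCLM (hn : 2 ≤ n) :
    PiLp 2 (fun _ : Fin (n - 1) => E) →L[ℝ] PiLp 2 (fun _ : Fin (n - 1) => E) :=
  LinearMap.mkContinuous
    { toFun := mtT n U
      map_add' := fun z w => by
        ext j
        simp only [mtT_apply, PiLp.add_apply, extz_add, mtX_add]
        abel
      map_smul' := fun c z => by
        ext j
        simp only [mtT_apply, PiLp.smul_apply, extz_smul, mtX_smul, RingHom.id_apply]
        module }
    1 fun z => by simpa using norm_mtT_le hn z

lemma mtTCLM_apply (hn : 2 ≤ n) (z : PiLp 2 (fun _ : Fin (n - 1) => E)) :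
    mtTCLM n U hn z = mtT n U z := rfl

lemma norm_mtTCLM_le (hn : 2 ≤ n) : ‖mtTCLM n U hn‖ ≤ 1 :=
  LinearMap.mkContinuous_norm_le _ zero_le_one _

variable (n U) in
noncomputable def mtFix (hn : 2 ≤ n) : Submodule ℝ (PiLp 2 (fun _ : Fin (n - 1) => E)) :=
  (mtTCLM n U hn).eqLocus
    (1 : PiLp 2 (fun _ : Fin (n - 1) => E) →L[ℝ] PiLp 2 (fun _ : Fin (n - 1) => E))

lemma mem_mtFix_iff (hn : 2 ≤ n) {y : PiLp 2 (fun _ : Fin (n - 1) => E)} :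
    y ∈ mtFix n U hn ↔ mtT n U y = y := by
  simp [mtFix, mtTCLM_apply]

end MalitskyTam

section FixedPoints

variable {E : Type*} [NormedAddCommGroup E] [InnerProductSpace ℝ E]
  {n : ℕ} {U : ℕ → Submodule ℝ E} [∀ i, (U i).HasOrthogonalProjection]

lemma mtX_succ_eq_of_mtT_eq {y : PiLp 2 (fun _ : Fin (n - 1) => E)} (hy : mtT n U y = y)
    {i : ℕ} (hi : i < n - 1) : mtX n U (extz y) (i + 1) = mtX n U (extz y) i := by
  have h := congrArg (fun v : PiLp 2 (fun _ : Fin (n - 1) => E) => v ⟨i, hi⟩) hy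
  simpa [mtT_apply, sub_eq_zero] using h

lemma mtX_eq_mtX_zero_of_mtT_eq {y : PiLp 2 (fun _ : Fin (n - 1) => E)} (hy : mtT n U y = y)
    {i : ℕ} (hi : i ≤ n - 1) : mtX n U (extz y) i = mtX n U (extz y) 0 := by
  induction i with
  | zero => rfl
  | succ i ih => rw [mtX_succ_eq_of_mtT_eq hy (by omega), ih (by omega)]

lemma mtX_zero_mem_iInf_of_mtT_eq {y : PiLp 2 (fun _ : Fin (n - 1) => E)} (hy : mtT n U y = y) :
    mtX n U (extz y) 0 ∈ ⨅ i : Fin n, U i :=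
  (Submodule.mem_iInf _).2 fun i => by
    rw [← mtX_eq_mtX_zero_of_mtT_eq hy (i := i) (by omega)]
    exact mtX_mem _ (by omega)

lemma extz_sub_mtX_zero_mem_orthogonal_of_mtT_eq {y : PiLp 2 (fun _ : Fin (n - 1) => E)}
    (hy : mtT n U y = y) {j : ℕ} (hj : j < n - 1) :
    extz y j - mtX n U (extz y) 0 ∈ (⨅ i : Fin n, U i)ᗮ := by
  induction j with
  | zero =>
    rw [mtX_zero]
    exact Submodule.orthogonal_le (iInf_fin_le_of_lt (n := n) U (by omega))
      (sub_pr_mem_orthogonal _ _)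
  | succ j ih =>
    have hproj := Submodule.orthogonal_le (iInf_fin_le_of_lt (n := n) U (by omega))
      (sub_pr_mem_orthogonal (U (j + 1)) (mtX n U (extz y) j + extz y (j + 1) - extz y j))
    rw [← mtX_succ_of_le _ (by omega), mtX_succ_eq_of_mtT_eq hy (by omega)] at hproj
    convert add_mem hproj (ih (by omega)) using 1
    abel

lemma mtX_toLp_const (hn : 2 ≤ n) {x : E} (hx : x ∈ ⨅ i : Fin n, U i) {i : ℕ} (hi : i < n) :
    mtX n U (extz (WithLp.toLp 2 fun _ => x : PiLp 2 (fun _ : Fin (n - 1) => E))) i = x := by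
  have hxU : ∀ k < n, x ∈ U k := fun k hk => iInf_fin_le_of_lt U hk hx
  have h₀ : mtX n U (extz (WithLp.toLp 2 fun _ => x : PiLp 2 (fun _ : Fin (n - 1) => E))) 0
      = x := by
    rw [mtX_zero, extz_toLp_const x (by omega), pr_eq_self (hxU 0 (by omega))]
  induction i with
  | zero => exact h₀
  | succ i ih =>
    rcases Nat.lt_or_ge (i + 1) (n - 1) with h | h
    · rw [mtX_succ_of_le _ (by omega), ih (by omega), extz_toLp_const x h,
        extz_toLp_const x (by omega), add_sub_cancel_right, pr_eq_self (hxU _ hi)]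
    · rw [mtX_succ_of_eq _ (by omega), h₀, ih (by omega), extz_toLp_const x (by omega),
        add_sub_cancel_right, pr_eq_self (hxU _ hi)]

lemma mtT_toLp_const (hn : 2 ≤ n) {x : E} (hx : x ∈ ⨅ i : Fin n, U i) :
    mtT n U (WithLp.toLp 2 fun _ => x) = WithLp.toLp 2 fun _ => x := by
  ext j
  rw [mtT_apply, mtX_toLp_const hn hx (by omega), mtX_toLp_const hn hx (by omega), sub_self,
    add_zero]

lemma sum_mem_orthogonal_of_mem_orthogonal_mtFix (hn : 2 ≤ n)
    {v : PiLp 2 (fun _ : Fin (n - 1) => E)} (hv : v ∈ (mtFix n U hn)ᗮ) :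
    ∑ j, v j ∈ (⨅ i : Fin n, U i)ᗮ := by
  refine (Submodule.mem_orthogonal _ _).2 fun x hx => ?_
  rw [← inner_toLp_const]
  exact Submodule.inner_right_of_mem_orthogonal
    ((mem_mtFix_iff hn).2 (mtT_toLp_const hn hx)) hv

variable [CompleteSpace E]

instance (hn : 2 ≤ n) : (mtFix n U hn).HasOrthogonalProjection :=
  haveI : CompleteSpace (mtFix n U hn) := ContinuousLinearMap.completeSpace_eqLocus _ _
  inferInstance

lemma mtT_starProjection_mtFix (hn : 2 ≤ n) (z : PiLp 2 (fun _ : Fin (n - 1) => E)) :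
    mtT n U ((mtFix n U hn).starProjection z) = (mtFix n U hn).starProjection z :=
  (mem_mtFix_iff hn).1 (Submodule.starProjection_apply_mem _ z)

lemma eq_starProjection_mtFix_of_forall_norm_sub_le (hn : 2 ≤ n)
    {z f : PiLp 2 (fun _ : Fin (n - 1) => E)} (hf : mtT n U f = f)
    (hmin : ∀ q, mtT n U q = q → ‖z - f‖ ≤ ‖z - q‖) :
    f = (mtFix n U hn).starProjection z :=
  Submodule.eq_starProjection_of_forall_norm_sub_le _ ((mem_mtFix_iff hn).2 hf)
    fun q hq => hmin q ((mem_mtFix_iff hn).1 hq)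

theorem tendsto_starProjection_mtFix_of_iteration (hn : 2 ≤ n) {t : ℝ} (ht₀ : 0 < t)
    (ht₁ : t < 1) {z : ℕ → PiLp 2 (fun _ : Fin (n - 1) => E)}
    (hz : ∀ k, z (k + 1) = (1 - t) • z k + t • mtT n U (z k)) :
    Tendsto z atTop (𝓝 ((mtFix n U hn).starProjection (z 0))) := by
  refine tendsto_starProjection_of_averaged_iteration (mtTCLM n U hn) (norm_mtTCLM_le hn)
    _ rfl ht₀ ht₁ fun k => ?_
  rw [hz k, mtTCLM_apply]

theorem inv_smul_sum_sub_mtX_zero_mem_orthogonal (hn : 2 ≤ n)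
    (z : PiLp 2 (fun _ : Fin (n - 1) => E)) :
    ((n : ℝ) - 1)⁻¹ • ∑ j, z j - mtX n U (extz ((mtFix n U hn).starProjection z)) 0
      ∈ (⨅ i : Fin n, U i)ᗮ := by
  set f := (mtFix n U hn).starProjection z
  set c := mtX n U (extz f) 0
  have h₁ : ∑ j, (z j - f j) ∈ (⨅ i : Fin n, U i)ᗮ :=
    sum_mem_orthogonal_of_mem_orthogonal_mtFix hn
      (Submodule.sub_starProjection_mem_orthogonal z)
  have h₂ : ∑ j, (f j - c) ∈ (⨅ i : Fin n, U i)ᗮ := Submodule.sum_mem _ fun j _ =>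
    extz_coe f j ▸ extz_sub_mtX_zero_mem_orthogonal_of_mtT_eq (mtT_starProjection_mtFix hn z) j.2
  convert Submodule.smul_mem _ ((n : ℝ) - 1)⁻¹ (add_mem h₁ h₂) using 1
  rw [← Nat.cast_pred (by omega), ← Finset.sum_add_distrib]
  simp only [sub_add_sub_cancel, Finset.sum_sub_distrib, smul_sub,
    inv_smul_sum_const (show n - 1 ≠ 0 by omega)]

end FixedPoints

/-- for `n ≥ 3`, closed subspaces `U₀, …, U_{n−1}` with intersection `Z`, and
`0 < λ < 1`, the relaxed Malitsky–Tam iteration `z_{k+1} = (1−λ) z_k + λ T z_k` converges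
strongly to `P_{Fix T}(z₀)` (characterized by the nearest-point property), and
`P₀ ((z_k)₀) → P_Z ((z_{0,0} + ⋯ + z_{0,n−2})/(n−1))` strongly (`P_Z` applied to the average,
characterized by orthogonality).  In particular, if `z₀ = (x₀, …, x₀)` then
`P₀ ((z_k)₀) → P_Z x₀`. -/
theorem stmt18 (n : ℕ) (hn : 3 ≤ n) (U : ℕ → Submodule ℝ X) [∀ i, CompleteSpace (U i)]
    (lam : ℝ) (hlam0 : 0 < lam) (hlam1 : lam < 1)
    (zseq : ℕ → PiLp 2 (fun _ : Fin (n - 1) => X))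
    (hrec : ∀ k : ℕ, zseq (k + 1) = (1 - lam) • zseq k + lam • mtT n U (zseq k)) :
    (∀ f : PiLp 2 (fun _ : Fin (n - 1) => X),
      (f ∈ {y : PiLp 2 (fun _ : Fin (n - 1) => X) | mtT n U y = y} ∧
        ∀ q ∈ {y : PiLp 2 (fun _ : Fin (n - 1) => X) | mtT n U y = y},
          ‖zseq 0 - f‖ ≤ ‖zseq 0 - q‖) →
      Tendsto zseq atTop (nhds f)) ∧
    (∀ w : X,
      (w ∈ (⨅ i : Fin n, U (i : ℕ)) ∧
        ((n : ℝ) - 1)⁻¹ • (∑ j : Fin (n - 1), zseq 0 j) - w ∈ (⨅ i : Fin n, U (i : ℕ))ᗮ) →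
      Tendsto (fun k : ℕ => pr (U 0) (zseq k ⟨0, by omega⟩)) atTop (nhds w)) ∧
    (∀ x0 : X, (∀ j : Fin (n - 1), zseq 0 j = x0) →
      ∀ w : X,
        (w ∈ (⨅ i : Fin n, U (i : ℕ)) ∧ x0 - w ∈ (⨅ i : Fin n, U (i : ℕ))ᗮ) →
        Tendsto (fun k : ℕ => pr (U 0) (zseq k ⟨0, by omega⟩)) atTop (nhds w)) := by
  have hn₂ : 2 ≤ n := by omega
  set f₀ := (mtFix n U hn₂).starProjection (zseq 0)
  have hlim : Tendsto zseq atTop (𝓝 f₀) :=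
    tendsto_starProjection_mtFix_of_iteration hn₂ hlam0 hlam1 hrec
  have hpr : Tendsto (fun k => pr (U 0) (zseq k ⟨0, by omega⟩)) atTop
      (𝓝 (mtX n U (extz f₀) 0)) := by
    rw [mtX_zero, extz_coe _ ⟨0, by omega⟩, pr_eq_starProjection]
    have hcont : Continuous fun y : PiLp 2 (fun _ : Fin (n - 1) => X) =>
        (U 0).starProjection (y ⟨0, by omega⟩) := by fun_prop
    exact (hcont.tendsto f₀).comp hlim
  have hZ : ∀ w : X, (w ∈ (⨅ i : Fin n, U (i : ℕ)) ∧
      ((n : ℝ) - 1)⁻¹ • (∑ j : Fin (n - 1), zseq 0 j) - w ∈ (⨅ i : Fin n, U (i : ℕ))ᗮ) →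
      Tendsto (fun k : ℕ => pr (U 0) (zseq k ⟨0, by omega⟩)) atTop (𝓝 w) := by
    rintro w ⟨hw, hwa⟩
    rwa [Submodule.eq_of_mem_of_sub_mem_orthogonal hw
      (mtX_zero_mem_iInf_of_mtT_eq (mtT_starProjection_mtFix hn₂ _)) hwa
      (inv_smul_sum_sub_mtX_zero_mem_orthogonal hn₂ (zseq 0))]
  refine ⟨fun f ⟨hf, hmin⟩ => ?_, hZ, fun x₀ hx₀ w hw => hZ w ⟨hw.1, ?_⟩⟩
  · rwa [eq_starProjection_mtFix_of_forall_norm_sub_le hn₂ hf hmin]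
  · rw [Finset.sum_congr rfl fun j _ => hx₀ j, ← Nat.cast_pred (by omega),
      inv_smul_sum_const (by omega)]
    exact hw.2
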